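/- The homomorphism ν([x,y:r]) = exp(πi t ((x,x)+(y,y)-(x,y)+2r)) on the integral Heisenberg group H(L) is invariant under the SL(2,Z)-action A.[x,y:r] = [dx - cy, ay - bx : r], i.e. ν(A.[x,y:r]) = ν([x,y:r]) for all A = (a b; c d) ∈ SL(2,Z). -/

import Mathlib

open Complex

/-- The character value `ν([x,y:r]) = exp(πi t ((x,x)+(y,y)-(x,y)+2r))`. -/
noncomputable def heisNu {V : Type*} [AddCommGroup V] [Module ℝ V]
    (B : V →ₗ[ℝ] V →ₗ[ℝ] ℝ) (t : ℚ) (u w : V) (s : ℝ) : ℂ :=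
  Complex.exp (Real.pi * Complex.I * (t : ℝ) * ((B u u + B w w - B u w + 2 * s : ℝ) : ℂ))

/- Under `A ∈ SL(2,ℤ)` the form `(x,x) + (y,y) - (x,y)` changes by
`(b² + bd + d² - 1)(x,x) + (c² + ca + a² - 1)(y,y) - 2(ab + bc + cd)(x,y)`, and the first two
coefficients are even because `b, d` (resp. `a, c`) are never both even when `ad - bc = 1`.
Since `t` scales every `(u,w)` into `ℤ`, the change of the exponent is a multiple of `2πi`. -/

theorem even_sq_add_mul_add_sq_sub_one_of_det_eq_one {a b c d : ℤ} (hdet : a * d - b * c = 1) :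
    Even (b ^ 2 + b * d + d ^ 2 - 1) := by
  have not_both_even : ¬ (Even b ∧ Even d) := by
    rintro ⟨hb, hd⟩
    have : Even (a * d - b * c) := (hd.mul_left a).sub (hb.mul_right c)
    simp [hdet] at this
  simp only [Int.even_sub, Int.even_add, Int.even_mul, Int.even_pow] at not_both_even ⊢
  tauto

section HeisenbergForm

variable {R M : Type*} [CommRing R] [AddCommGroup M] [Module R M] (B : M →ₗ[R] M →ₗ[R] R)

def heisForm (u w : M) : R := B u u + B w w - B u w

theorem heisForm_sl2_smul_sub (hB : ∀ u w, B u w = B w u) {a b c d : ℤ}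
    (hdet : a * d - b * c = 1) (x y : M) :
    heisForm B (d • x - c • y) (a • y - b • x) - heisForm B x y =
      ((b ^ 2 + b * d + d ^ 2 - 1 : ℤ) : R) * B x x + ((c ^ 2 + c * a + a ^ 2 - 1 : ℤ) : R) * B y y
        - ((2 * (a * b + b * c + c * d) : ℤ) : R) * B x y := by
  have hdet' : (a : R) * d - b * c = 1 := by exact_mod_cast congrArg (Int.cast : ℤ → R) hdet
  simp only [heisForm, map_sub, map_zsmul, LinearMap.sub_apply, LinearMap.smul_apply,
    zsmul_eq_mul, hB y x]
  push_cast
  linear_combination (-B x y) * hdet'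

end HeisenbergForm

theorem heisNu_eq_of_exists_int {V : Type*} [AddCommGroup V] [Module ℝ V]
    (B : V →ₗ[ℝ] V →ₗ[ℝ] ℝ) (t : ℚ) {u w u' w' : V} (s : ℝ)
    (h : ∃ n : ℤ, (t : ℝ) * (heisForm B u' w' - heisForm B u w) = 2 * n) :
    heisNu B t u' w' s = heisNu B t u w s := by
  obtain ⟨n, hn⟩ := h
  have hn' : ((t : ℝ) : ℂ) * ((heisForm B u' w' : ℝ) - (heisForm B u w : ℝ)) = 2 * n := by
    exact_mod_cast congrArg ((↑) : ℝ → ℂ) hn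
  rw [heisNu, heisNu, Complex.exp_eq_exp_iff_exists_int]
  refine ⟨n, ?_⟩
  simp only [heisForm] at hn'
  push_cast at hn' ⊢
  linear_combination (Real.pi * Complex.I) * hn'

theorem heisNu_sl2_invariant_general (V : Type*) [AddCommGroup V] [Module ℝ V]
    (B : V →ₗ[ℝ] V →ₗ[ℝ] ℝ) (hB : ∀ u w : V, B u w = B w u)
    (L : Submodule ℤ V)
    (t : ℚ) (ht : ∀ u ∈ L, ∀ w ∈ L, ∃ n : ℤ, (t : ℝ) * B u w = (n : ℝ))
    (a b c d : ℤ) (hdet : a * d - b * c = 1)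
    (x y : V) (hx : x ∈ L) (hy : y ∈ L) (r : ℝ) :
    heisNu B t (d • x - c • y) (a • y - b • x) r = heisNu B t x y r := by
  apply heisNu_eq_of_exists_int
  obtain ⟨kx, hkx⟩ := ht x hx x hx
  obtain ⟨ky, hky⟩ := ht y hy y hy
  obtain ⟨kxy, hkxy⟩ := ht x hx y hy
  obtain ⟨mx, hmx⟩ := even_sq_add_mul_add_sq_sub_one_of_det_eq_one hdet
  obtain ⟨my, hmy⟩ := even_sq_add_mul_add_sq_sub_one_of_det_eq_one
    (show d * a - c * b = 1 by linarith)
  refine ⟨mx * kx + my * ky - (a * b + b * c + c * d) * kxy, ?_⟩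
  rw [heisForm_sl2_smul_sub B hB hdet, hmx, hmy]
  push_cast
  linear_combination (2 * mx : ℝ) * hkx + (2 * my : ℝ) * hky
    - (2 * ((a : ℝ) * b + b * c + c * d)) * hkxy

/-- The character `ν([x,y:r]) = exp(πi t ((x,x)+(y,y)-(x,y)+2r))` of the integral
Heisenberg group is invariant under the `SL(2,ℤ)`-action
`A.[x,y:r] = [dx - cy, ay - bx : r]`. -/
theorem heisNu_sl2_invariant (V : Type*) [AddCommGroup V] [Module ℝ V]
    (B : V →ₗ[ℝ] V →ₗ[ℝ] ℝ) (hB : ∀ u w : V, B u w = B w u)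
    (L : Submodule ℤ V)
    (hposdef : ∀ u ∈ L, u ≠ 0 → 0 < B u u)
    (heven : ∀ u ∈ L, ∃ n : ℤ, B u u = 2 * (n : ℝ))
    (t : ℚ) (ht : ∀ u ∈ L, ∀ w ∈ L, ∃ n : ℤ, (t : ℝ) * B u w = (n : ℝ))
    (a b c d : ℤ) (hdet : a * d - b * c = 1)
    (x y : V) (hx : x ∈ L) (hy : y ∈ L) (r : ℝ)
    (hr : ∃ n : ℤ, r + B x y / 2 = (n : ℝ)) :
    heisNu B t (d • x - c • y) (a • y - b • x) r = heisNu B t x y r :=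
  heisNu_sl2_invariant_general V B hB L t ht a b c d hdet x y hx hy r
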